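/- In an edge-transitive graph, every induced path on four vertices closes to an induced cycle. -/

import Mathlib

open SimpleGraph

/-- A walk `c` from `v` to `v` is an induced (chordless) cycle if it is a cycle and
every edge of the graph between vertices of the cycle is an edge of the cycle. -/
def IsInducedCycle {V : Type*} (G : SimpleGraph V) {v : V} (c : G.Walk v v) : Prop :=
  c.IsCycle ∧ ∀ x ∈ c.support, ∀ y ∈ c.support, G.Adj x y → s(x, y) ∈ c.edges

/-- A vertex `v` is avoidable if every induced path `x - v - y` on three vertices
closes to an induced cycle. -/
def Avoidable {V : Type*} (G : SimpleGraph V) (v : V) : Prop :=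
  ∀ x y : V, G.Adj v x → G.Adj v y → x ≠ y → ¬ G.Adj x y →
    ∃ c : G.Walk v v, IsInducedCycle G c ∧ s(x, v) ∈ c.edges ∧ s(v, y) ∈ c.edges

/-!
Every graph with an edge has an avoidable edge `uv`: for each induced path `x - u - v - y`, the
vertices `x` and `y` are joined by a path whose inner vertices lie outside the closed
neighbourhoods of `u` and `v`, and a shortest such path closes `x u v y` to an induced cycle.
An automorphism carries this avoidable edge onto any given edge of an edge-transitive graph.

Existence is proved, together with a clique `S` to be avoided, by induction on the number of
non-isolated vertices. If some clique `Q` is far from an edge but from no vertex of `S`, recurse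
into the component `C` of that edge among the vertices far from `Q`, after turning the outer
boundary of `C` into a clique: any two boundary vertices are joined through `Q`. Otherwise an
edge `ab` disjoint from `S` minimising `|N(a) ∪ N(b)|` is avoidable.
-/

namespace SimpleGraph

variable {V : Type*} {G : SimpleGraph V}

theorem Walk.isChordless_of_length_eq_dist {u v : V} (p : G.Walk u v)
    (hp : p.length = G.dist u v) : p.IsChordless := by
  classical
  induction p with
  | nil => simp [isChordless_iff_forall_mem_edges]
  | @cons u w v h p ih =>
    rw [length_cons] at hp
    have htail : p.length = G.dist w v := by
      obtain ⟨q, hq⟩ := Reachable.exists_walk_length_eq_dist ⟨p⟩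
      have hshort := dist_le (cons h q)
      rw [length_cons] at hshort
      have := dist_le p
      omega
    have hfirst : ∀ q ∈ p.support, G.Adj u q → q = w := by
      intro q hq huq
      have hshort := dist_le (cons huq (p.dropUntil q hq))
      have hsplit := congrArg Walk.length (p.take_spec hq)
      simp only [length_append, length_cons] at hshort hsplit
      exact (eq_of_length_eq_zero (p := p.takeUntil q hq) (by omega)).symm
    rw [isChordless_iff_forall_mem_edges] at ih ⊢
    intro a b ha hb hab
    simp only [support_cons, List.mem_cons] at ha hb
    rcases ha with rfl | ha <;> rcases hb with rfl | hb
    · exact absurd hab (G.loopless.irrefl _)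
    · simp [hfirst b hb hab]
    · simp [hfirst a ha hab.symm, Sym2.eq_swap]
    · exact List.mem_cons_of_mem _ (ih htail ha hb hab)

def restrict (G : SimpleGraph V) (T : Set V) : SimpleGraph V where
  Adj a b := G.Adj a b ∧ a ∈ T ∧ b ∈ T
  symm := ⟨fun _ _ ⟨h, ha, hb⟩ => ⟨h.symm, hb, ha⟩⟩
  loopless := ⟨fun a ⟨h, _, _⟩ => G.loopless.irrefl a h⟩

@[simp]
theorem restrict_adj {T : Set V} {a b : V} :
    (G.restrict T).Adj a b ↔ G.Adj a b ∧ a ∈ T ∧ b ∈ T := Iff.rfl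

theorem restrict_le (T : Set V) : G.restrict T ≤ G := fun _ _ h => (restrict_adj.1 h).1

theorem Walk.support_subset_of_restrict {T : Set V} {a b : V} (p : (G.restrict T).Walk a b)
    (ha : a ∈ T) : ∀ w ∈ p.support, w ∈ T := by
  induction p with
  | nil => simpa using ha
  | cons h p ih => simpa [ha] using ih (restrict_adj.1 h).2.2

theorem Reachable.of_adj_reachable {H : SimpleGraph V}
    (hGH : ∀ ⦃a b⦄, G.Adj a b → H.Reachable a b) {a b : V} (h : G.Reachable a b) :
    H.Reachable a b := by
  obtain ⟨p⟩ := h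
  induction p with
  | nil => rfl
  | cons hab _ ih => exact (hGH hab).trans ih

theorem Adj.reachable_restrict {T : Set V} {a b : V} (h : G.Adj a b) (ha : a ∈ T)
    (hb : b ∈ T) : (G.restrict T).Reachable a b :=
  Adj.reachable (G := G.restrict T) ⟨h, ha, hb⟩

theorem Reachable.mem_of_restrict {T : Set V} {a b : V} (h : (G.restrict T).Reachable a b)
    (ha : a ∈ T) : b ∈ T :=
  h.some.support_subset_of_restrict ha b h.some.end_mem_support

def farSet (G : SimpleGraph V) (Q : Set V) : Set V := {w | ∀ q ∈ Q, w ≠ q ∧ ¬G.Adj q w}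

@[simp]
theorem mem_farSet {Q : Set V} {w : V} : w ∈ G.farSet Q ↔ ∀ q ∈ Q, w ≠ q ∧ ¬G.Adj q w := Iff.rfl

theorem mem_farSet_singleton {a w : V} : w ∈ G.farSet {a} ↔ w ≠ a ∧ ¬G.Adj a w := by
  simp

theorem mem_farSet_pair {a b w : V} :
    w ∈ G.farSet {a, b} ↔ (w ≠ a ∧ ¬G.Adj a w) ∧ (w ≠ b ∧ ¬G.Adj b w) := by
  simp

theorem subset_farSet_comm {A B : Set V} (h : A ⊆ G.farSet B) : B ⊆ G.farSet A :=
  fun b hb _ ha => ⟨(h ha b hb).1.symm, fun hab => (h ha b hb).2 hab.symm⟩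

def IsInducedP4 (G : SimpleGraph V) (x u v y : V) : Prop :=
  G.Adj x u ∧ G.Adj u v ∧ G.Adj v y ∧ x ≠ v ∧ y ≠ u ∧ x ≠ y ∧
    ¬G.Adj x v ∧ ¬G.Adj u y ∧ ¬G.Adj x y

theorem IsInducedP4.symm {x u v y : V} (h : G.IsInducedP4 x u v y) : G.IsInducedP4 y v u x := by
  obtain ⟨hxu, huv, hvy, hxv, hyu, hxy, hnxv, hnuy, hnxy⟩ := h
  exact ⟨hvy.symm, huv.symm, hxu.symm, hyu, hxv, hxy.symm, fun h => hnuy h.symm,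
    fun h => hnxv h.symm, fun h => hnxy h.symm⟩

/-- Avoidability of the edge `uv` in the sense of Beisegel et al., phrased by connectivity
instead of by induced cycles (`EdgeAvoidable.exists_isInducedCycle` recovers those). -/
def EdgeAvoidable (G : SimpleGraph V) (u v : V) : Prop :=
  ∀ x y, G.IsInducedP4 x u v y → (G.restrict ({x, y} ∪ G.farSet {u, v})).Reachable x y

theorem IsInducedP4.eq_of_adj {x u v y w : V} (hP : G.IsInducedP4 x u v y)
    (hw : w ∈ ({x, y} ∪ G.farSet {u, v} : Set V)) (huw : G.Adj u w) : w = x := by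
  obtain ⟨-, -, -, -, -, -, -, hnuy, -⟩ := hP
  rcases hw with (rfl | rfl) | hw
  exacts [rfl, absurd huw hnuy, absurd huw (mem_farSet_pair.1 hw).1.2]

theorem exists_isInducedCycle_of_isChordless {x u v y : V} (hP : G.IsInducedP4 x u v y)
    (p : G.Walk x y) (hp : p.IsPath) (hc : p.IsChordless)
    (hT : ∀ w ∈ p.support, w ∈ ({x, y} ∪ G.farSet {u, v} : Set V)) :
    ∃ c : G.Walk u u, IsInducedCycle G c ∧
      s(x, u) ∈ c.edges ∧ s(u, v) ∈ c.edges ∧ s(v, y) ∈ c.edges := by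
  have hnbr_u : ∀ w ∈ p.support, G.Adj u w → w = x := fun w hw => hP.eq_of_adj (hT w hw)
  have hnbr_v : ∀ w ∈ p.support, G.Adj v w → w = y := fun w hw =>
    hP.symm.eq_of_adj (by rw [Set.pair_comm y x, Set.pair_comm v u]; exact hT w hw)
  obtain ⟨hxu, huv, hvy, hxv, hyu, -, -, -, -⟩ := hP
  have hu : u ∉ p.support := fun h => hyu (hnbr_v u h huv.symm).symm
  have hv : v ∉ p.support := fun h => hxv (hnbr_u v h huv).symm
  let c : G.Walk u u := .cons hxu.symm ((p.concat hvy.symm).concat huv.symm)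
  have hcyc : c.IsCycle := by
    refine (Walk.cons_isCycle_iff _ _).2 ⟨(hp.concat hv _).concat ?_ _, ?_⟩
    · simp [hu, huv.ne]
    · simp only [Walk.edges_concat, List.concat_eq_append, List.mem_append, List.mem_singleton,
        not_or]
      refine ⟨⟨fun h => hu (p.fst_mem_support_of_mem_edges h), ?_⟩, ?_⟩ <;>
        simp [hyu.symm, huv.ne, hxv]
  have hmem : ∀ w ∈ c.support, w = u ∨ w = v ∨ w ∈ p.support := by
    intro w hw
    simp only [c, Walk.support_cons, Walk.support_concat, List.mem_cons, List.mem_append] at hw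
    tauto
  have hu_edges : ∀ b ∈ c.support, G.Adj u b → s(u, b) ∈ c.edges := by
    intro b hb hub
    rcases hmem b hb with rfl | rfl | hb
    · exact absurd hub (G.loopless.irrefl _)
    · simp [c, Sym2.eq_swap]
    · simp [c, hnbr_u b hb hub]
  have hv_edges : ∀ b ∈ c.support, G.Adj v b → s(v, b) ∈ c.edges := by
    intro b hb hvb
    rcases hmem b hb with rfl | rfl | hb
    · simp [c]
    · exact absurd hvb (G.loopless.irrefl _)
    · simp [c, hnbr_v b hb hvb, Sym2.eq_swap]
  have hchord : ∀ a ∈ c.support, ∀ b ∈ c.support, G.Adj a b → s(a, b) ∈ c.edges := by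
    intro a ha b hb hab
    rcases hmem a ha with rfl | rfl | ha'
    · exact hu_edges b hb hab
    · exact hv_edges b hb hab
    rcases hmem b hb with rfl | rfl | hb'
    · exact Sym2.eq_swap ▸ hu_edges a ha hab.symm
    · exact Sym2.eq_swap ▸ hv_edges a ha hab.symm
    · simp [c, hc.mem_edges ha' hb' hab]
  exact ⟨c, ⟨hcyc, hchord⟩, by simp [c, Sym2.eq_swap], by simp [c], by simp [c]⟩

theorem EdgeAvoidable.exists_isInducedCycle {x u v y : V} (h : G.EdgeAvoidable u v)
    (hP : G.IsInducedP4 x u v y) :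
    ∃ c : G.Walk u u, IsInducedCycle G c ∧
      s(x, u) ∈ c.edges ∧ s(u, v) ∈ c.edges ∧ s(v, y) ∈ c.edges := by
  set T := {x, y} ∪ G.farSet {u, v}
  obtain ⟨p, hp, hlen⟩ := (h x y hP).exists_path_of_dist
  have hT : ∀ w ∈ p.support, w ∈ T := p.support_subset_of_restrict (by simp)
  refine exists_isInducedCycle_of_isChordless hP (p.mapLe (restrict_le T)) (hp.mapLe _) ?_ ?_
  · rw [Walk.isChordless_iff_forall_mem_edges]
    intro a b ha hb hab
    rw [Walk.support_mapLe_eq_support] at ha hb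
    rw [Walk.edges_mapLe_eq_edges]
    exact (p.isChordless_of_length_eq_dist hlen).mem_edges ha hb ⟨hab, hT a ha, hT b hb⟩
  · exact fun w hw => hT w (by rwa [Walk.support_mapLe_eq_support] at hw)

theorem EdgeAvoidable.symm {u v : V} (h : G.EdgeAvoidable u v) : G.EdgeAvoidable v u := by
  intro x y hP
  rw [Set.pair_comm v u, Set.pair_comm x y]
  exact (h y x hP.symm).symm

theorem IsInducedP4.of_iso {W : Type*} {G' : SimpleGraph W} (φ : G ≃g G') {x u v y : V}
    (h : G'.IsInducedP4 (φ x) (φ u) (φ v) (φ y)) : G.IsInducedP4 x u v y := by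
  simpa [IsInducedP4, φ.map_adj_iff, φ.injective.ne_iff] using h

theorem EdgeAvoidable.map {W : Type*} {G' : SimpleGraph W} (φ : G ≃g G') {u v : V}
    (h : G.EdgeAvoidable u v) : G'.EdgeAvoidable (φ u) (φ v) := by
  intro x' y' hP
  obtain ⟨x, rfl⟩ := φ.surjective x'
  obtain ⟨y, rfl⟩ := φ.surjective y'
  let f : G.restrict ({x, y} ∪ G.farSet {u, v}) →g
      G'.restrict ({φ x, φ y} ∪ G'.farSet {φ u, φ v}) :=
    ⟨φ, fun hab => by simpa [φ.map_adj_iff, φ.injective.eq_iff] using hab⟩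
  exact (h x y (hP.of_iso φ)).map f

theorem IsClique.reachable_restrict {Q T : Set V} (hQ : G.IsClique Q) (hQT : Q ⊆ T)
    {a b qa qb : V} (hqa : qa ∈ Q) (hqb : qb ∈ Q) (ha : G.Adj qa a) (hb : G.Adj qb b)
    (haT : a ∈ T) (hbT : b ∈ T) : (G.restrict T).Reachable a b := by
  have hq : (G.restrict T).Reachable qa qb := by
    rcases eq_or_ne qa qb with rfl | hne
    exacts [.rfl, (hQ hqa hqb hne).reachable_restrict (hQT hqa) (hQT hqb)]
  exact (ha.symm.reachable_restrict haT (hQT hqa)).trans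
    (hq.trans (hb.reachable_restrict (hQT hqb) hbT))

def outerBoundary (G : SimpleGraph V) (C : Set V) : Set V := {t | t ∉ C ∧ ∃ w ∈ C, G.Adj w t}

/-- Stands in for `G` when the part of `G` beyond the outer boundary of `C` links any two
boundary vertices. -/
def fillBoundary (G : SimpleGraph V) (C : Set V) : SimpleGraph V where
  Adj p q := p ≠ q ∧
    ((G.Adj p q ∧ (p ∈ C ∨ q ∈ C)) ∨ (p ∈ G.outerBoundary C ∧ q ∈ G.outerBoundary C))
  symm := ⟨fun _ _ ⟨hne, h⟩ =>
    ⟨hne.symm, h.imp (fun ⟨hpq, hC⟩ => ⟨hpq.symm, hC.symm⟩) And.symm⟩⟩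
  loopless := ⟨fun _ h => h.1 rfl⟩

section fillBoundary

variable {C : Set V}

theorem fillBoundary_adj_of_mem {w t : V} (hw : w ∈ C) :
    (G.fillBoundary C).Adj w t ↔ G.Adj w t :=
  ⟨fun ⟨_, h⟩ => h.elim And.left fun h => absurd hw h.1.1,
    fun h => ⟨h.ne, .inl ⟨h, .inl hw⟩⟩⟩

theorem fillBoundary_adj_imp {p q : V} (h : (G.fillBoundary C).Adj p q) :
    G.Adj p q ∨ p ∈ G.outerBoundary C ∧ q ∈ G.outerBoundary C :=
  h.2.imp_left And.left

theorem isClique_outerBoundary : (G.fillBoundary C).IsClique (G.outerBoundary C) :=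
  fun _ hp _ hq hne => ⟨hne, .inr ⟨hp, hq⟩⟩

theorem outerBoundary_subset_support : G.outerBoundary C ⊆ (G.fillBoundary C).support :=
  fun _ ⟨_, w, hw, hwt⟩ => ⟨w, (fillBoundary_adj_of_mem hw).2 hwt |>.symm⟩

theorem support_fillBoundary_subset : (G.fillBoundary C).support ⊆ C ∪ G.outerBoundary C := by
  rintro p ⟨q, -, ⟨hpq, hp | hq⟩ | ⟨hp, -⟩⟩
  · exact .inl hp
  · by_cases hp : p ∈ C
    exacts [.inl hp, .inr ⟨hp, q, hq, hpq.symm⟩]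
  · exact .inr hp

theorem support_fillBoundary_subset_support : (G.fillBoundary C).support ⊆ G.support := by
  rintro p ⟨q, -, ⟨hpq, -⟩ | ⟨⟨-, w, -, hwp⟩, -⟩⟩
  exacts [⟨q, hpq⟩, ⟨w, hwp.symm⟩]

theorem ncard_support_fillBoundary_lt [Finite V] {q : V} (hq : q ∈ G.support) (hqC : q ∉ C)
    (hqbd : q ∉ G.outerBoundary C) : (G.fillBoundary C).support.ncard < G.support.ncard :=
  Set.ncard_lt_ncard ⟨support_fillBoundary_subset_support,
    fun h => (support_fillBoundary_subset (h hq)).elim hqC hqbd⟩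

theorem farSet_fillBoundary {Q : Set V} (hQ : Q ⊆ C) :
    (G.fillBoundary C).farSet Q = G.farSet Q := by
  ext w
  simp +contextual [fillBoundary_adj_of_mem (hQ _)]

theorem EdgeAvoidable.of_fillBoundary {Q : Set V} {u v : V} (hQ : G.IsClique Q)
    (hCQ : C ⊆ G.farSet Q) (hbd : ∀ t ∈ G.outerBoundary C, ∃ q ∈ Q, G.Adj q t)
    (hu : u ∈ C) (hv : v ∈ C) (h : (G.fillBoundary C).EdgeAvoidable u v) :
    G.EdgeAvoidable u v := by
  intro x y hP
  set T := {x, y} ∪ G.farSet {u, v}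
  have huvC : {u, v} ⊆ C := Set.insert_subset hu (Set.singleton_subset_iff.2 hv)
  have hQT : Q ⊆ T := fun q hq => .inr (subset_farSet_comm (huvC.trans hCQ) hq)
  have hlink : ∀ a ∈ G.outerBoundary C, ∀ b ∈ G.outerBoundary C, a ∈ T → b ∈ T →
      (G.restrict T).Reachable a b := fun a ha b hb haT hbT =>
    let ⟨_, hqa, hqaa⟩ := hbd a ha
    let ⟨_, hqb, hqbb⟩ := hbd b hb
    hQ.reachable_restrict hQT hqa hqb hqaa hqbb haT hbT
  by_cases hxy : x ∈ G.outerBoundary C ∧ y ∈ G.outerBoundary C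
  · exact hlink x hxy.1 y hxy.2 (by simp [T]) (by simp [T])
  obtain ⟨hxu, huv, hvy, hxv, hyu, hxy', hnxv, hnuy, hnxy⟩ := hP
  have hP' : (G.fillBoundary C).IsInducedP4 x u v y :=
    ⟨((fillBoundary_adj_of_mem hu).2 hxu.symm).symm, (fillBoundary_adj_of_mem hu).2 huv,
      (fillBoundary_adj_of_mem hv).2 hvy, hxv, hyu, hxy',
      fun h => hnxv ((fillBoundary_adj_of_mem hv).1 h.symm).symm,
      fun h => hnuy ((fillBoundary_adj_of_mem hu).1 h),
      fun h => (fillBoundary_adj_imp h).elim hnxy hxy⟩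
  have hreach := h x y hP'
  rw [farSet_fillBoundary huvC] at hreach
  refine hreach.of_adj_reachable fun a b hab => ?_
  obtain ⟨hab, haT, hbT⟩ := restrict_adj.1 hab
  rcases fillBoundary_adj_imp hab with hab | ⟨ha, hb⟩
  exacts [hab.reachable_restrict haT hbT, hlink a ha b hb haT hbT]

end fillBoundary

theorem exists_adj_of_mem_outerBoundary {Q : Set V} {c t : V} (hc : c ∈ G.farSet Q)
    (ht : t ∈ G.outerBoundary {w | (G.restrict (G.farSet Q)).Reachable c w}) :
    ∃ q ∈ Q, G.Adj q t := by
  obtain ⟨htC, w, hw, hwt⟩ := ht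
  have hwQ : w ∈ G.farSet Q := hw.mem_of_restrict hc
  have htQ : t ∉ G.farSet Q := fun htQ =>
    htC (hw.trans (hwt.reachable_restrict hwQ htQ))
  simp only [mem_farSet, not_forall, not_and_or, not_not] at htQ
  obtain ⟨q, hq, rfl | hqt⟩ := htQ
  exacts [absurd hwt.symm (hwQ t hq).2, ⟨q, hq, hqt⟩]

def IsShield (G : SimpleGraph V) (S Q : Set V) : Prop :=
  Q.Nonempty ∧ G.IsClique Q ∧ Q ⊆ G.support ∧
    (∃ c d, G.Adj c d ∧ c ∈ G.farSet Q ∧ d ∈ G.farSet Q) ∧ Disjoint S (G.farSet Q)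

theorem notMem_of_forall_not_isShield {S : Set V} (hS : G.IsClique S)
    (hsh : ∀ Q, ¬G.IsShield S Q) {w c d : V} (hw : w ∈ G.support) (hcd : G.Adj c d)
    (hc : c ∈ G.farSet {w}) (hd : d ∈ G.farSet {w}) : w ∉ S := by
  intro hwS
  have hfar : ¬Disjoint S (G.farSet {w}) := fun hdis =>
    hsh {w} ⟨Set.singleton_nonempty w, isClique_singleton w, by simpa using hw,
      ⟨c, d, hcd, hc, hd⟩, hdis⟩
  obtain ⟨s, hs, hsw⟩ := Set.not_disjoint_iff.1 hfar
  rw [mem_farSet_singleton] at hsw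
  exact hsw.2 (hS hwS hs hsw.1.symm)

theorem exists_adj_not_adj_of_ncard_le [Finite V] {a b x y : V} (hax : G.Adj a x)
    (hbx : ¬G.Adj b x) (hxy : ¬G.Adj x y)
    (hle : (G.neighborSet a ∪ G.neighborSet b).ncard ≤
      (G.neighborSet y ∪ G.neighborSet b).ncard) :
    ∃ z, G.Adj y z ∧ ¬G.Adj a z ∧ ¬G.Adj b z := by
  by_contra! h
  have hsub : G.neighborSet y ∪ G.neighborSet b ⊆ G.neighborSet a ∪ G.neighborSet b := by
    rintro z (hz | hz)
    · by_cases haz : G.Adj a z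
      exacts [.inl haz, .inr (h z hz haz)]
    · exact .inr hz
  have hx : x ∈ G.neighborSet y ∪ G.neighborSet b :=
    Set.eq_of_subset_of_ncard_le hsub hle ▸ .inl hax
  exact hx.elim (fun h => hxy h.symm) hbx

theorem edgeAvoidable_of_forall_not_isShield [Finite V] {S : Set V} (hS : G.IsClique S)
    (hSsupp : S ⊆ G.support) (hsh : ∀ Q, ¬G.IsShield S Q) {a b : V} (hab : G.Adj a b)
    (hbS : b ∉ S) (hmin : ∀ a' b', G.Adj a' b' → a' ∉ S → b' ∉ S →
      (G.neighborSet a ∪ G.neighborSet b).ncard ≤ (G.neighborSet a' ∪ G.neighborSet b').ncard) :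
    G.EdgeAvoidable a b := by
  intro x y hP
  obtain ⟨hxa, -, hby, hxb, hya, hxy, hnxb, hnay, hnxy⟩ := hP
  have hyS : y ∉ S := notMem_of_forall_not_isShield hS hsh ⟨b, hby.symm⟩ hxa
    (mem_farSet_singleton.2 ⟨hxy, fun h => hnxy h.symm⟩)
    (mem_farSet_singleton.2 ⟨hya.symm, fun h => hnay h.symm⟩)
  obtain ⟨z, hyz, haz, hbz⟩ := exists_adj_not_adj_of_ncard_le hxa.symm (fun h => hnxb h.symm)
    hnxy (hmin y b hby.symm hyS hbS)
  have hza : z ≠ a := by rintro rfl; exact hnay hyz.symm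
  have hzb : z ≠ b := by rintro rfl; exact haz hab
  by_cases hxz : G.Adj x z
  · have hz : z ∈ ({x, y} ∪ G.farSet {a, b} : Set V) :=
      .inr (mem_farSet_pair.2 ⟨⟨hza, haz⟩, hzb, hbz⟩)
    exact (hxz.reachable_restrict (by simp) hz).trans (hyz.symm.reachable_restrict hz (by simp))
  -- Otherwise `{y, z}` is far from the edge `xa`, so some `s ∈ S` is far from `{y, z}`;
  -- then `yz` is far from `s`, which forces `s ∉ S`.
  exfalso
  have hxz' : x ≠ z := by rintro rfl; exact hnxy hyz.symm
  obtain ⟨s, hs, hsyz⟩ : ∃ s ∈ S, s ∈ G.farSet {y, z} := by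
    by_contra! h
    refine hsh {y, z} ⟨⟨y, by simp⟩, isClique_pair.2 fun _ => hyz, ?_, ⟨x, a, hxa, ?_, ?_⟩,
      Set.disjoint_left.2 h⟩
    · simpa [Set.insert_subset_iff] using ⟨⟨b, hby.symm⟩, ⟨y, hyz.symm⟩⟩
    · exact mem_farSet_pair.2 ⟨⟨hxy, fun h => hnxy h.symm⟩, hxz', fun h => hxz h.symm⟩
    · exact mem_farSet_pair.2
        ⟨⟨hya.symm, fun h => hnay h.symm⟩, hza.symm, fun h => haz h.symm⟩
  rw [mem_farSet_pair] at hsyz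
  exact notMem_of_forall_not_isShield hS hsh (hSsupp hs) hyz
    (mem_farSet_singleton.2 ⟨hsyz.1.1.symm, fun h => hsyz.1.2 h.symm⟩)
    (mem_farSet_singleton.2 ⟨hsyz.2.1.symm, fun h => hsyz.2.2 h.symm⟩) hs

theorem exists_edgeAvoidable_of_isClique [Finite V] (G : SimpleGraph V) (S : Set V)
    (hS : G.IsClique S) (hSsupp : S ⊆ G.support) (hedge : ∃ a b, G.Adj a b ∧ a ∉ S ∧ b ∉ S) :
    ∃ u v, G.Adj u v ∧ u ∉ S ∧ v ∉ S ∧ G.EdgeAvoidable u v := by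
  by_cases hsh : ∃ Q, G.IsShield S Q
  · obtain ⟨Q, ⟨q, hq⟩, hQ, hQsupp, ⟨c, d, hcd, hc, hd⟩, hSQ⟩ := hsh
    set C := {w | (G.restrict (G.farSet Q)).Reachable c w}
    have hCQ : C ⊆ G.farSet Q := fun w hw => hw.mem_of_restrict hc
    have hcC : c ∈ C := Reachable.refl c
    have hdC : d ∈ C := hcd.reachable_restrict hc hd
    have hqC : q ∉ C := fun h => (hCQ h q hq).1 rfl
    have hqbd : q ∉ G.outerBoundary C := fun ⟨_, w, hw, hwq⟩ => (hCQ hw q hq).2 hwq.symm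
    obtain ⟨u, v, huv, hu, hv, havoid⟩ := exists_edgeAvoidable_of_isClique (G.fillBoundary C)
      (G.outerBoundary C) isClique_outerBoundary outerBoundary_subset_support
      ⟨c, d, (fillBoundary_adj_of_mem hcC).2 hcd, fun h => h.1 hcC, fun h => h.1 hdC⟩
    have huC : u ∈ C := (support_fillBoundary_subset ⟨v, huv⟩).resolve_right hu
    have hvC : v ∈ C := (support_fillBoundary_subset ⟨u, huv.symm⟩).resolve_right hv
    exact ⟨u, v, (fillBoundary_adj_of_mem huC).1 huv,
      fun h => Set.disjoint_left.1 hSQ h (hCQ huC), fun h => Set.disjoint_left.1 hSQ h (hCQ hvC),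
      havoid.of_fillBoundary hQ hCQ (fun t => exists_adj_of_mem_outerBoundary hc) huC hvC⟩
  · simp only [not_exists] at hsh
    obtain ⟨a₀, b₀, hedge⟩ := hedge
    obtain ⟨⟨a, b⟩, ⟨hab, haS, hbS⟩, hmin⟩ := Set.exists_min_image
      {e : V × V | G.Adj e.1 e.2 ∧ e.1 ∉ S ∧ e.2 ∉ S}
      (fun e => (G.neighborSet e.1 ∪ G.neighborSet e.2).ncard) (Set.toFinite _) ⟨(a₀, b₀), hedge⟩
    exact ⟨a, b, hab, haS, hbS, edgeAvoidable_of_forall_not_isShield hS hSsupp hsh hab hbS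
      fun a' b' h ha hb => hmin (a', b') ⟨h, ha, hb⟩⟩
termination_by G.support.ncard
decreasing_by exact ncard_support_fillBoundary_lt (hQsupp hq) hqC hqbd

end SimpleGraph

/-- In a finite edge-transitive graph, every induced path on four vertices closes to an
induced cycle. -/
theorem stmt_19 {V : Type*} [Fintype V] (G : SimpleGraph V)
    (hET : ∀ e ∈ G.edgeSet, ∀ f ∈ G.edgeSet, ∃ φ : G ≃g G, e.map φ = f) :
    ∀ x u v y : V, G.Adj x u → G.Adj u v → G.Adj v y →
      x ≠ v → y ≠ u → x ≠ y → ¬ G.Adj x v → ¬ G.Adj u y → ¬ G.Adj x y →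
      ∃ c : G.Walk u u, IsInducedCycle G c ∧
        s(x, u) ∈ c.edges ∧ s(u, v) ∈ c.edges ∧ s(v, y) ∈ c.edges := by
  intro x u v y hxu huv hvy hxv hyu hxy hnxv hnuy hnxy
  obtain ⟨a, b, hab, -, -, havoid⟩ :=
    G.exists_edgeAvoidable_of_isClique ∅ (by simp) (by simp) ⟨u, v, huv, id, id⟩
  obtain ⟨φ, hφ⟩ := hET s(a, b) hab s(u, v) huv
  have huv_avoid : G.EdgeAvoidable u v := by
    rw [Sym2.map_mk, Sym2.eq_iff] at hφ
    rcases hφ with ⟨rfl, rfl⟩ | ⟨rfl, rfl⟩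
    exacts [havoid.map φ, (havoid.map φ).symm]
  exact huv_avoid.exists_isInducedCycle ⟨hxu, huv, hvy, hxv, hyu, hxy, hnxv, hnuy, hnxy⟩
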